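/- Let A be a category admitting equalisers, λ : FG → GF an entwining from a monad F = (F, m, e) to a comonad G = (G, δ, ε) on A, g : Id → G a grouplike morphism, Ĝ the lifting of G to a comonad on A_F, and K_g : A → (A_F)^{Ĝ} the functor a ↦ ((F(a), m_a), g̃_a) induced by the grouplike morphism, where g̃ = λ ∘ Fg. Then K_g is full and faithful if and only if the monad F^g (the equaliser of gF and λ ∘ Fg) is isomorphic to the identity monad on A; equivalently, for every object a of A the diagram a →^{e_a} F(a) ⇉ GF(a), with parallel pair g_{F(a)} and λ_a ∘ F(g_a), is an equaliser diagram. -/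

import Mathlib

open CategoryTheory CategoryTheory.Limits

namespace Paper


variable {A : Type*} [Category A]

/-- An entwining (mixed distributive law) `λ : TG ⟶ GT` from a monad `T` to a comonad `G`. -/
structure Entwining (T : Monad A) (G : Comonad A) where
  lam : (G : A ⥤ A) ⋙ (T : A ⥤ A) ⟶ (T : A ⥤ A) ⋙ (G : A ⥤ A)
  comp_mul : ∀ a : A, T.μ.app ((G : A ⥤ A).obj a) ≫ lam.app a =
      (T : A ⥤ A).map (lam.app a) ≫ lam.app ((T : A ⥤ A).obj a) ≫
        (G : A ⥤ A).map (T.μ.app a)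
  comp_unit : ∀ a : A, T.η.app ((G : A ⥤ A).obj a) ≫ lam.app a = (G : A ⥤ A).map (T.η.app a)
  delta_comp : ∀ a : A, lam.app a ≫ G.δ.app ((T : A ⥤ A).obj a) =
      (T : A ⥤ A).map (G.δ.app a) ≫ lam.app ((G : A ⥤ A).obj a) ≫
        (G : A ⥤ A).map (lam.app a)
  eps_comp : ∀ a : A, lam.app a ≫ G.ε.app ((T : A ⥤ A).obj a) = (T : A ⥤ A).map (G.ε.app a)

namespace Entwining

variable {T : Monad A} {G : Comonad A} (E : Entwining T G)

lemma lam_natural {a b : A} (f : a ⟶ b) :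
    (T : A ⥤ A).map ((G : A ⥤ A).map f) ≫ E.lam.app b =
      E.lam.app a ≫ (G : A ⥤ A).map ((T : A ⥤ A).map f) :=
  E.lam.naturality f

/-- The value of the lifted comonad `Ĝ` on an object of `A_T`:
`Ĝ(a, h) = (G(a), G(h) ∘ λ_a)`. -/
@[simps]
def liftAlgebra (X : T.Algebra) : T.Algebra where
  A := (G : A ⥤ A).obj X.A
  a := E.lam.app X.A ≫ (G : A ⥤ A).map X.a
  unit := by
    rw [← Category.assoc, E.comp_unit, ← Functor.map_comp, X.unit]
    simp
  assoc := by
    calc T.μ.app ((G : A ⥤ A).obj X.A) ≫ E.lam.app X.A ≫ (G : A ⥤ A).map X.a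
        = (T.μ.app ((G : A ⥤ A).obj X.A) ≫ E.lam.app X.A) ≫ (G : A ⥤ A).map X.a := by
          rw [Category.assoc]
      _ = (T : A ⥤ A).map (E.lam.app X.A) ≫ E.lam.app ((T : A ⥤ A).obj X.A) ≫
            (G : A ⥤ A).map (T.μ.app X.A) ≫ (G : A ⥤ A).map X.a := by
          rw [E.comp_mul]; simp [Category.assoc]
      _ = (T : A ⥤ A).map (E.lam.app X.A) ≫ E.lam.app ((T : A ⥤ A).obj X.A) ≫
            (G : A ⥤ A).map ((T : A ⥤ A).map X.a) ≫ (G : A ⥤ A).map X.a := by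
          rw [← Functor.map_comp, X.assoc, Functor.map_comp]
      _ = (T : A ⥤ A).map (E.lam.app X.A) ≫ (T : A ⥤ A).map ((G : A ⥤ A).map X.a) ≫
            E.lam.app X.A ≫ (G : A ⥤ A).map X.a := by
          rw [← Category.assoc (E.lam.app ((T : A ⥤ A).obj X.A)), ← E.lam_natural X.a]
          simp [Category.assoc]
      _ = (T : A ⥤ A).map (E.lam.app X.A ≫ (G : A ⥤ A).map X.a) ≫
            E.lam.app X.A ≫ (G : A ⥤ A).map X.a := by
          rw [Functor.map_comp, Category.assoc]

/-- The lifting `Ĝ` of the comonad `G` to the Eilenberg–Moore category `A_T`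
along the entwining `λ`. -/
@[simps]
def liftedComonad : Comonad (T.Algebra) where
  obj X := E.liftAlgebra X
  map {X Y} f :=
    { f := (G : A ⥤ A).map f.f
      h := by
        dsimp only [liftAlgebra]
        calc (T : A ⥤ A).map ((G : A ⥤ A).map f.f) ≫ E.lam.app Y.A ≫ (G : A ⥤ A).map Y.a
            = (E.lam.app X.A ≫ (G : A ⥤ A).map ((T : A ⥤ A).map f.f)) ≫
                (G : A ⥤ A).map Y.a := by
              rw [← Category.assoc, E.lam_natural f.f]
          _ = E.lam.app X.A ≫ (G : A ⥤ A).map ((T : A ⥤ A).map f.f ≫ Y.a) := by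
              rw [Category.assoc, ← Functor.map_comp]
          _ = E.lam.app X.A ≫ (G : A ⥤ A).map (X.a ≫ f.f) := by rw [f.h]
          _ = (E.lam.app X.A ≫ (G : A ⥤ A).map X.a) ≫ (G : A ⥤ A).map f.f := by
              rw [Functor.map_comp, Category.assoc] }
  map_id X := by ext; exact (G : A ⥤ A).map_id X.A
  map_comp f g := by ext; exact (G : A ⥤ A).map_comp f.f g.f
  ε :=
    { app := fun X =>
        { f := G.ε.app X.A
          h := by
            dsimp only [liftAlgebra, Functor.id_obj]
            have hnat : (G : A ⥤ A).map X.a ≫ G.ε.app X.A =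
                G.ε.app ((T : A ⥤ A).obj X.A) ≫ X.a := by
              simpa using (G.ε.naturality X.a).symm
            rw [Category.assoc, hnat, ← Category.assoc, E.eps_comp] }
      naturality := fun X Y f => by ext; exact G.ε.naturality f.f }
  δ :=
    { app := fun X =>
        { f := G.δ.app X.A
          h := by
            dsimp
            calc (T : A ⥤ A).map (G.δ.app X.A) ≫ E.lam.app ((G : A ⥤ A).obj X.A) ≫
                  (G : A ⥤ A).map (E.lam.app X.A ≫ (G : A ⥤ A).map X.a)
                = (T : A ⥤ A).map (G.δ.app X.A) ≫ E.lam.app ((G : A ⥤ A).obj X.A) ≫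
                    (G : A ⥤ A).map (E.lam.app X.A) ≫
                    (G : A ⥤ A).map ((G : A ⥤ A).map X.a) := by
                  rw [Functor.map_comp]
              _ = (E.lam.app X.A ≫ G.δ.app ((T : A ⥤ A).obj X.A)) ≫
                    (G : A ⥤ A).map ((G : A ⥤ A).map X.a) := by
                  rw [E.delta_comp]; simp [Category.assoc]
              _ = E.lam.app X.A ≫ (G : A ⥤ A).map X.a ≫ G.δ.app X.A := by
                  have hnat : (G : A ⥤ A).map X.a ≫ G.δ.app X.A =
                      G.δ.app ((T : A ⥤ A).obj X.A) ≫
                        (G : A ⥤ A).map ((G : A ⥤ A).map X.a) := by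
                    simpa using (G.δ.naturality X.a).symm
                  rw [hnat, Category.assoc]
              _ = (E.lam.app X.A ≫ (G : A ⥤ A).map X.a) ≫ G.δ.app X.A := by
                  rw [Category.assoc] }
      naturality := fun X Y f => by ext; exact G.δ.naturality f.f }
  coassoc X := by ext; exact G.coassoc X.A
  left_counit X := by ext; exact G.left_counit X.A
  right_counit X := by ext; exact G.right_counit X.A


/-- The value of the lifted monad `T̂` on an object of `A^G`: `T̂(a, θ) = (T(a), λ_a ∘ T(θ))`. -/
@[simps]
def liftCoalgebra (X : G.Coalgebra) : G.Coalgebra where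
  A := (T : A ⥤ A).obj X.A
  a := (T : A ⥤ A).map X.a ≫ E.lam.app X.A
  counit := by
    rw [Category.assoc, E.eps_comp, ← Functor.map_comp, X.counit]
    simp
  coassoc := by
    calc ((T : A ⥤ A).map X.a ≫ E.lam.app X.A) ≫ G.δ.app ((T : A ⥤ A).obj X.A)
        = (T : A ⥤ A).map X.a ≫ (T : A ⥤ A).map (G.δ.app X.A) ≫
            E.lam.app ((G : A ⥤ A).obj X.A) ≫ (G : A ⥤ A).map (E.lam.app X.A) := by
          rw [Category.assoc, E.delta_comp]
      _ = (T : A ⥤ A).map (X.a ≫ G.δ.app X.A) ≫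
            E.lam.app ((G : A ⥤ A).obj X.A) ≫ (G : A ⥤ A).map (E.lam.app X.A) := by
          rw [Functor.map_comp, Category.assoc]
      _ = (T : A ⥤ A).map X.a ≫ (T : A ⥤ A).map ((G : A ⥤ A).map X.a) ≫
            E.lam.app ((G : A ⥤ A).obj X.A) ≫ (G : A ⥤ A).map (E.lam.app X.A) := by
          rw [X.coassoc, Functor.map_comp, Category.assoc]
      _ = (T : A ⥤ A).map X.a ≫ E.lam.app X.A ≫
            (G : A ⥤ A).map ((T : A ⥤ A).map X.a) ≫ (G : A ⥤ A).map (E.lam.app X.A) := by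
          rw [← Category.assoc ((T : A ⥤ A).map ((G : A ⥤ A).map X.a)), E.lam_natural X.a]
          simp only [Category.assoc]
      _ = ((T : A ⥤ A).map X.a ≫ E.lam.app X.A) ≫
            (G : A ⥤ A).map ((T : A ⥤ A).map X.a ≫ E.lam.app X.A) := by
          rw [Functor.map_comp]
          simp only [Category.assoc]


/-- The lifting of the endofunctor `T` to `A^G`. -/
@[simps]
def liftFunctorT : G.Coalgebra ⥤ G.Coalgebra where
  obj X := E.liftCoalgebra X
  map {X Y} f :=
    { f := (T : A ⥤ A).map f.f
      h := by
        dsimp only [liftCoalgebra]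
        calc ((T : A ⥤ A).map X.a ≫ E.lam.app X.A) ≫ (G : A ⥤ A).map ((T : A ⥤ A).map f.f)
            = (T : A ⥤ A).map X.a ≫ E.lam.app X.A ≫
                (G : A ⥤ A).map ((T : A ⥤ A).map f.f) := by rw [Category.assoc]
          _ = (T : A ⥤ A).map X.a ≫ (T : A ⥤ A).map ((G : A ⥤ A).map f.f) ≫
                E.lam.app Y.A := by rw [← E.lam_natural f.f]
          _ = (T : A ⥤ A).map (X.a ≫ (G : A ⥤ A).map f.f) ≫ E.lam.app Y.A := by
              rw [Functor.map_comp, Category.assoc]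
          _ = (T : A ⥤ A).map (f.f ≫ Y.a) ≫ E.lam.app Y.A := by rw [f.h]
          _ = (T : A ⥤ A).map f.f ≫ (T : A ⥤ A).map Y.a ≫ E.lam.app Y.A := by
              rw [Functor.map_comp, Category.assoc] }
  map_id X := by ext; exact (T : A ⥤ A).map_id X.A
  map_comp f g := by ext; exact (T : A ⥤ A).map_comp f.f g.f

/-- The unit of the lifted monad. -/
@[simps]
def liftEta : 𝟭 (G.Coalgebra) ⟶ E.liftFunctorT where
  app X :=
    { f := T.η.app X.A
      h := by
        dsimp [liftFunctorT, liftCoalgebra]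
        have hnat : X.a ≫ T.η.app ((G : A ⥤ A).obj X.A) =
            T.η.app X.A ≫ (T : A ⥤ A).map X.a := by
          simpa using T.η.naturality X.a
        rw [← Category.assoc, ← hnat, Category.assoc, E.comp_unit] }
  naturality X Y f := by
    ext
    show f.f ≫ T.η.app Y.A = T.η.app X.A ≫ (T : A ⥤ A).map f.f
    simpa using T.η.naturality f.f

/-- The multiplication of the lifted monad. -/
@[simps]
def liftMu : E.liftFunctorT ⋙ E.liftFunctorT ⟶ E.liftFunctorT where
  app X :=
    { f := T.μ.app X.A
      h := by
        dsimp
        have hnat : (T : A ⥤ A).map ((T : A ⥤ A).map X.a) ≫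
              T.μ.app ((G : A ⥤ A).obj X.A) = T.μ.app X.A ≫ (T : A ⥤ A).map X.a := by
          simpa using T.μ.naturality X.a
        calc ((T : A ⥤ A).map ((T : A ⥤ A).map X.a ≫ E.lam.app X.A) ≫
                E.lam.app ((T : A ⥤ A).obj X.A)) ≫ (G : A ⥤ A).map (T.μ.app X.A)
            = (T : A ⥤ A).map ((T : A ⥤ A).map X.a) ≫
                ((T : A ⥤ A).map (E.lam.app X.A) ≫ E.lam.app ((T : A ⥤ A).obj X.A) ≫
                  (G : A ⥤ A).map (T.μ.app X.A)) := by
              rw [Functor.map_comp]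
              simp only [Category.assoc]
          _ = (T : A ⥤ A).map ((T : A ⥤ A).map X.a) ≫
                T.μ.app ((G : A ⥤ A).obj X.A) ≫ E.lam.app X.A := by
              rw [← E.comp_mul]
          _ = (T.μ.app X.A ≫ (T : A ⥤ A).map X.a) ≫ E.lam.app X.A := by
              rw [← Category.assoc, hnat]
          _ = T.μ.app X.A ≫ (T : A ⥤ A).map X.a ≫ E.lam.app X.A := by
              rw [Category.assoc] }
  naturality X Y f := by
    ext
    show (T : A ⥤ A).map ((T : A ⥤ A).map f.f) ≫ T.μ.app Y.A =
      T.μ.app X.A ≫ (T : A ⥤ A).map f.f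
    simpa using T.μ.naturality f.f

/-- The lifting `T̂` of the monad `T` to the Eilenberg–Moore category `A^G`
along the entwining `λ`. -/
def liftedMonad : Monad (G.Coalgebra) where
  toFunctor := E.liftFunctorT
  η := E.liftEta
  μ := E.liftMu
  assoc X := by ext; exact T.assoc X.A
  left_unit X := by ext; exact T.left_unit X.A
  right_unit X := by ext; exact T.right_unit X.A


end Entwining

/-- A grouplike morphism `g : Id ⟶ G` for a comonad `G`. -/
structure Grouplike {A : Type*} [Category A] (G : Comonad A) where
  g : 𝟭 A ⟶ (G : A ⥤ A)
  counit : ∀ a : A, g.app a ≫ G.ε.app a = 𝟙 a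
  comul : ∀ a : A, g.app a ≫ G.δ.app a = g.app a ≫ (G : A ⥤ A).map (g.app a)


namespace Entwining

variable {A : Type*} [Category A] {F : Monad A} {G : Comonad A}
variable (E : Entwining F G) (gl : Grouplike G)

/-- The natural transformation `gF : F ⟶ GF`. -/
def gF : (F : A ⥤ A) ⟶ (F : A ⥤ A) ⋙ (G : A ⥤ A) :=
  Functor.whiskerLeft (F : A ⥤ A) gl.g

/-- The natural transformation `g̃ = λ ∘ Fg : F ⟶ GF`. -/
def tildeg : (F : A ⥤ A) ⟶ (F : A ⥤ A) ⋙ (G : A ⥤ A) :=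
  Functor.whiskerRight gl.g (F : A ⥤ A) ≫ E.lam

@[simp] lemma gF_app (a : A) : (gF (F := F) gl).app a = gl.g.app ((F : A ⥤ A).obj a) := rfl

@[simp] lemma tildeg_app (a : A) :
    (E.tildeg gl).app a = (F : A ⥤ A).map (gl.g.app a) ≫ E.lam.app a := rfl

lemma eta_equalizes_app (a : A) :
    F.η.app a ≫ (gF (F := F) gl).app a = F.η.app a ≫ (E.tildeg gl).app a := by
  have h1 := gl.g.naturality (F.η.app a)
  have h2 := F.η.naturality (gl.g.app a)
  simp only [Functor.id_map, Functor.id_obj, Functor.comp_map] at h1 h2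
  simp only [gF_app, tildeg_app]
  rw [← Category.assoc, ← h2, Category.assoc, E.comp_unit, ← h1]

lemma eta_equalizes : F.η ≫ gF (F := F) gl = F.η ≫ E.tildeg gl := by
  ext a
  exact eta_equalizes_app E gl a

variable [HasEqualizers A]

/-- The equaliser functor `F^g` of the pair `gF`, `λ ∘ Fg`. -/
noncomputable def Fg : A ⥤ A := equalizer (gF (F := F) gl) (E.tildeg gl)

/-- The equaliser inclusion `i_F : F^g ⟶ F`. -/
noncomputable def iF : E.Fg gl ⟶ (F : A ⥤ A) := equalizer.ι _ _

/-- The horizontal composite `i_F i_F : F^g F^g ⟶ FF`. -/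
noncomputable def iFiF : E.Fg gl ⋙ E.Fg gl ⟶ (F : A ⥤ A) ⋙ (F : A ⥤ A) :=
  Functor.whiskerLeft (E.Fg gl) (E.iF gl) ≫ Functor.whiskerRight (E.iF gl) (F : A ⥤ A)

/-- The canonical natural transformation `e' : Id ⟶ F^g` with `i_F ∘ e' = e`. -/
noncomputable def unitFg : 𝟭 A ⟶ E.Fg gl :=
  equalizer.lift F.η (eta_equalizes E gl)

end Entwining


namespace Entwining

variable {A : Type*} [Category A] {F : Monad A} {G : Comonad A}
variable (E : Entwining F G) (gl : Grouplike G)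

/-- `g̃_a` as a morphism of `F`-modules `(F(a), m_a) ⟶ Ĝ(F(a), m_a)`. -/
@[simps]
def tildegAlg (a : A) : F.free.obj a ⟶ E.liftedComonad.obj (F.free.obj a) where
  f := (F : A ⥤ A).map (gl.g.app a) ≫ E.lam.app a
  h := by
    show (F : A ⥤ A).map ((F : A ⥤ A).map (gl.g.app a) ≫ E.lam.app a) ≫
        E.lam.app ((F : A ⥤ A).obj a) ≫ (G : A ⥤ A).map (F.μ.app a) =
      F.μ.app a ≫ (F : A ⥤ A).map (gl.g.app a) ≫ E.lam.app a
    have hnat : (F : A ⥤ A).map ((F : A ⥤ A).map (gl.g.app a)) ≫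
        F.μ.app ((G : A ⥤ A).obj a) = F.μ.app a ≫ (F : A ⥤ A).map (gl.g.app a) := by
      simpa using F.μ.naturality (gl.g.app a)
    calc (F : A ⥤ A).map ((F : A ⥤ A).map (gl.g.app a) ≫ E.lam.app a) ≫
          E.lam.app ((F : A ⥤ A).obj a) ≫ (G : A ⥤ A).map (F.μ.app a)
        = (F : A ⥤ A).map ((F : A ⥤ A).map (gl.g.app a)) ≫
            ((F : A ⥤ A).map (E.lam.app a) ≫ E.lam.app ((F : A ⥤ A).obj a) ≫
              (G : A ⥤ A).map (F.μ.app a)) := by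
          rw [Functor.map_comp]
          simp only [Category.assoc]
      _ = (F : A ⥤ A).map ((F : A ⥤ A).map (gl.g.app a)) ≫
            F.μ.app ((G : A ⥤ A).obj a) ≫ E.lam.app a := by rw [← E.comp_mul]
      _ = (F.μ.app a ≫ (F : A ⥤ A).map (gl.g.app a)) ≫ E.lam.app a := by
          rw [← Category.assoc, hnat]
      _ = F.μ.app a ≫ (F : A ⥤ A).map (gl.g.app a) ≫ E.lam.app a := by
          rw [Category.assoc]

/-- The comparison functor `K_g : A ⥤ (A_F)^{Ĝ}`, `a ↦ ((F(a), m_a), g̃_a)`, induced by a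
grouplike morphism `g`. -/
@[simps]
def Kg : A ⥤ E.liftedComonad.Coalgebra where
  obj a :=
    { A := F.free.obj a
      a := E.tildegAlg gl a
      counit := by
        ext
        show ((F : A ⥤ A).map (gl.g.app a) ≫ E.lam.app a) ≫ G.ε.app ((F : A ⥤ A).obj a) =
          𝟙 ((F : A ⥤ A).obj a)
        rw [Category.assoc, E.eps_comp, ← Functor.map_comp, gl.counit]
        simp
      coassoc := by
        ext
        dsimp
        calc ((F : A ⥤ A).map (gl.g.app a) ≫ E.lam.app a) ≫ G.δ.app ((F : A ⥤ A).obj a)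
            = (F : A ⥤ A).map (gl.g.app a) ≫ (F : A ⥤ A).map (G.δ.app a) ≫
                E.lam.app ((G : A ⥤ A).obj a) ≫ (G : A ⥤ A).map (E.lam.app a) := by
              rw [Category.assoc, E.delta_comp]
          _ = (F : A ⥤ A).map (gl.g.app a ≫ G.δ.app a) ≫
                E.lam.app ((G : A ⥤ A).obj a) ≫ (G : A ⥤ A).map (E.lam.app a) := by
              rw [Functor.map_comp, Category.assoc]
          _ = (F : A ⥤ A).map (gl.g.app a) ≫ (F : A ⥤ A).map ((G : A ⥤ A).map (gl.g.app a)) ≫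
                E.lam.app ((G : A ⥤ A).obj a) ≫ (G : A ⥤ A).map (E.lam.app a) := by
              rw [gl.comul, Functor.map_comp, Category.assoc]
          _ = (F : A ⥤ A).map (gl.g.app a) ≫ E.lam.app a ≫
                (G : A ⥤ A).map ((F : A ⥤ A).map (gl.g.app a)) ≫
                (G : A ⥤ A).map (E.lam.app a) := by
              have hre := reassoc_of% (E.lam_natural (gl.g.app a))
              rw [hre]
          _ = ((F : A ⥤ A).map (gl.g.app a) ≫ E.lam.app a) ≫
                (G : A ⥤ A).map ((F : A ⥤ A).map (gl.g.app a) ≫ E.lam.app a) := by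
              rw [Functor.map_comp]
              simp only [Category.assoc] }
  map {a b} f :=
    { f := F.free.map f
      h := by
        ext
        dsimp
        have h1 : (F : A ⥤ A).map f ≫ (F : A ⥤ A).map (gl.g.app b) ≫ E.lam.app b =
            ((F : A ⥤ A).map (gl.g.app a) ≫ E.lam.app a) ≫
              (G : A ⥤ A).map ((F : A ⥤ A).map f) := by
          have := (E.tildeg gl).naturality f
          simpa using this
        exact h1.symm }
  map_id a := by ext; dsimp; simp
  map_comp f g := by ext; dsimp; simp

end Entwining

/-!
By the free–forgetful adjunction, morphisms `K_g(a) ⟶ K_g(b)` are the morphisms `a ⟶ F(b)`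
equalising `g_{F(b)}` and `λ_b ∘ F(g_b)`, and under this correspondence `K_g(h) = e_b ∘ h`.
Hence `K_g` is fully faithful exactly when every fork `a → F(a) ⇉ GF(a)` is an equaliser.
Since `F^g` is computed pointwise as the equaliser of the same pair and `i_F ∘ e' = e`,
this also says precisely that each component of `e' : Id ⟶ F^g` is invertible.
-/

lemma _root_.CategoryTheory.Functor.full_and_faithful_iff_map_bijective {C D : Type*}
    [Category C] [Category D] (K : C ⥤ D) :
    (K.Full ∧ K.Faithful) ↔ ∀ X Y : C, Function.Bijective (K.map : (X ⟶ Y) → _) :=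
  ⟨fun ⟨hfull, hfaith⟩ _ _ => ⟨hfaith.map_injective, hfull.map_surjective⟩,
    fun h => ⟨⟨(h _ _).2⟩, ⟨fun hk => (h _ _).1 hk⟩⟩⟩

lemma _root_.CategoryTheory.Limits.Fork.nonempty_isLimit_iff_bijective {C : Type*} [Category C]
    {X Y : C} {f g : X ⟶ Y} (t : Fork f g) :
    Nonempty (IsLimit t) ↔ ∀ W : C, Function.Bijective
      (fun k : W ⟶ t.pt => (⟨k ≫ t.ι, by simp only [Category.assoc, t.condition]⟩ :
        { h : W ⟶ X // h ≫ f = h ≫ g })) := by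
  refine ⟨fun ⟨ht⟩ W => (Fork.IsLimit.homIso ht W).bijective, fun h => ?_⟩
  have hfac : ∀ s : Fork f g,
      Function.surjInv (h s.pt).2 ⟨s.ι, s.condition⟩ ≫ t.ι = s.ι :=
    fun s => congrArg Subtype.val (Function.surjInv_eq (h s.pt).2 _)
  exact ⟨Fork.IsLimit.mk t _ hfac fun s m hm =>
    (h s.pt).1 (Subtype.ext (hm.trans (hfac s).symm))⟩

lemma _root_.CategoryTheory.Monad.adj_homEquiv_apply {C : Type*} [Category C] (T : Monad C)
    {a : C} {X : T.Algebra} (t : T.free.obj a ⟶ X) :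
    T.adj.homEquiv a X t = T.η.app a ≫ t.f := by
  rw [Adjunction.homEquiv_unit, Monad.adj_unit]
  rfl

namespace Entwining

variable {F : Monad A} {G : Comonad A} (E : Entwining F G) (gl : Grouplike G)

def unitFork (a : A) :
    Fork (gl.g.app ((F : A ⥤ A).obj a)) ((F : A ⥤ A).map (gl.g.app a) ≫ E.lam.app a) :=
  Fork.ofι (F.η.app a) (by simpa using eta_equalizes_app E gl a)

lemma unit_comp_tildeg_comp_map {a X : A} (φ : (F : A ⥤ A).obj a ⟶ X) :
    F.η.app a ≫ ((F : A ⥤ A).map (gl.g.app a) ≫ E.lam.app a) ≫ (G : A ⥤ A).map φ =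
      (F.η.app a ≫ φ) ≫ gl.g.app X := by
  have hnat : gl.g.app ((F : A ⥤ A).obj a) ≫ (G : A ⥤ A).map φ = φ ≫ gl.g.app X :=
    (gl.g.naturality φ).symm
  have heq : F.η.app a ≫ gl.g.app ((F : A ⥤ A).obj a) =
      F.η.app a ≫ (F : A ⥤ A).map (gl.g.app a) ≫ E.lam.app a :=
    eta_equalizes_app E gl a
  rw [← Category.assoc, ← heq, Category.assoc, hnat, Category.assoc]

/-- Both sides of the coalgebra condition are `F`-algebra maps out of the free algebra on `a`,
so it suffices to compare them after precomposing with `e_a`. -/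
lemma coalgebraHom_condition_iff {a b : A} (t : F.free.obj a ⟶ F.free.obj b) :
    E.tildegAlg gl a ≫ E.liftedComonad.map t = t ≫ E.tildegAlg gl b ↔
      F.adj.homEquiv _ _ t ≫ gl.g.app ((F : A ⥤ A).obj b) =
        F.adj.homEquiv _ _ t ≫ (F : A ⥤ A).map (gl.g.app b) ≫ E.lam.app b := by
  rw [← (F.adj.homEquiv _ _).injective.eq_iff]
  simp only [Monad.adj_homEquiv_apply, Monad.Algebra.comp_f, liftedComonad_map_f, tildegAlg_f]
  exact iff_of_eq
    (congrArg₂ (· = ·) (E.unit_comp_tildeg_comp_map gl t.f) (Category.assoc _ _ _).symm)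

def KgHomEquiv (a b : A) : ((E.Kg gl).obj a ⟶ (E.Kg gl).obj b) ≃
    { f : a ⟶ (F : A ⥤ A).obj b //
      f ≫ gl.g.app ((F : A ⥤ A).obj b) =
        f ≫ (F : A ⥤ A).map (gl.g.app b) ≫ E.lam.app b } :=
  (show ((E.Kg gl).obj a ⟶ (E.Kg gl).obj b) ≃
      { t : F.free.obj a ⟶ F.free.obj b // E.tildegAlg gl a ≫ E.liftedComonad.map t =
        t ≫ E.tildegAlg gl b } from
    { toFun := fun t => ⟨t.f, t.h⟩
      invFun := fun t => ⟨t.1, t.2⟩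
      left_inv := fun _ => rfl
      right_inv := fun _ => rfl }).trans
    (Equiv.subtypeEquiv (F.adj.homEquiv _ _) (E.coalgebraHom_condition_iff gl))

lemma KgHomEquiv_map {a b : A} (h : a ⟶ b) :
    (E.KgHomEquiv gl a b ((E.Kg gl).map h) : a ⟶ (F : A ⥤ A).obj b) = h ≫ F.η.app b := by
  change F.adj.homEquiv _ _ (F.free.map h) = _
  rw [Monad.adj_homEquiv_apply]
  exact (F.η.naturality h).symm

lemma Kg_full_and_faithful_iff_unitFork_isLimit :
    ((E.Kg gl).Full ∧ (E.Kg gl).Faithful) ↔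
      ∀ a : A, Nonempty (IsLimit (E.unitFork gl a)) := by
  simp only [Functor.full_and_faithful_iff_map_bijective, Fork.nonempty_isLimit_iff_bijective]
  rw [forall_comm]
  refine forall_congr' fun b => forall_congr' fun a => ?_
  rw [← (E.KgHomEquiv gl a b).comp_bijective]
  exact Iff.of_eq (congrArg _ (funext fun h => Subtype.ext (E.KgHomEquiv_map gl h)))

variable [HasEqualizers A]

lemma unitFg_app_comp_iF_app (a : A) : (E.unitFg gl).app a ≫ (E.iF gl).app a = F.η.app a :=
  NatTrans.congr_app (equalizer.lift_ι _ _) a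

noncomputable def isLimitForkIFApp (a : A) :
    IsLimit (Fork.ofι (f := gl.g.app ((F : A ⥤ A).obj a))
      (g := (F : A ⥤ A).map (gl.g.app a) ≫ E.lam.app a) ((E.iF gl).app a)
      (NatTrans.congr_app (equalizer.condition (gF (F := F) gl) (E.tildeg gl)) a)) :=
  isLimitForkMapOfIsLimit ((evaluation A A).obj a)
    (equalizer.condition (gF (F := F) gl) (E.tildeg gl))
    (equalizerIsEqualizer (gF (F := F) gl) (E.tildeg gl))

lemma isIso_unitFg_app_iff (a : A) :
    IsIso ((E.unitFg gl).app a) ↔ Nonempty (IsLimit (E.unitFork gl a)) := by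
  have hlift : (E.isLimitForkIFApp gl a).lift (E.unitFork gl a) = (E.unitFg gl).app a := by
    refine Fork.IsLimit.hom_ext (E.isLimitForkIFApp gl a) ?_
    rw [Fork.IsLimit.lift_ι]
    exact (E.unitFg_app_comp_iF_app gl a).symm
  rw [(E.isLimitForkIFApp gl a).nonempty_isLimit_iff_isIso_lift, hlift]
  exact Iff.rfl

lemma isIso_unitFg_iff_unitFork_isLimit :
    IsIso (E.unitFg gl) ↔ ∀ a : A, Nonempty (IsLimit (E.unitFork gl a)) := by
  rw [NatTrans.isIso_iff_isIso_app]
  exact forall_congr' (E.isIso_unitFg_app_iff gl)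

end Entwining

/-- **Proposition 3.5.**  Let `A` admit equalisers, `λ : FG ⟶ GF` an entwining from a
monad `F` to a comonad `G`, `g : Id ⟶ G` a grouplike morphism, `Ĝ` the lifting of `G` to
`A_F`, and `K_g : A ⥤ (A_F)^{Ĝ}` the induced comparison functor `a ↦ ((F(a), m_a), g̃_a)`.
Then `K_g` is full and faithful if and only if the monad `F^g` is (isomorphic to) the
identity monad, i.e. iff the canonical monad morphism `e' : Id ⟶ F^g` is an isomorphism;
equivalently, for every `a` the diagram `a ⟶ F(a) ⇉ GF(a)` (with parallel pair
`g_{F(a)}` and `λ_a ∘ F(g_a)` and equalising morphism `e_a`) is an equaliser diagram. -/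
theorem statement15 {A : Type*} [Category A] [HasEqualizers A]
    (F : Monad A) (G : Comonad A) (E : Entwining F G) (gl : Grouplike G) :
    (((E.Kg gl).Full ∧ (E.Kg gl).Faithful) ↔ IsIso (E.unitFg gl)) ∧
    (((E.Kg gl).Full ∧ (E.Kg gl).Faithful) ↔
      ∀ a : A, Nonempty (IsLimit (Fork.ofι
        (f := gl.g.app ((F : A ⥤ A).obj a))
        (g := (F : A ⥤ A).map (gl.g.app a) ≫ E.lam.app a)
        (F.η.app a) (by simpa using Entwining.eta_equalizes_app E gl a)))) :=
  ⟨(E.Kg_full_and_faithful_iff_unitFork_isLimit gl).trans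
      (E.isIso_unitFg_iff_unitFork_isLimit gl).symm,
    E.Kg_full_and_faithful_iff_unitFork_isLimit gl⟩

end Paper
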